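/- Let θ ∈ ℝ^d be such that y_i a_iᵀθ ≤ 0 for at least one i ∈ [n]. Then −β(θ) · θᵀ ∇f(θ) ≤ log(2n − 1), where β(θ) := ((1/n) Σ_{i=1}^n (1 + exp(y_i a_iᵀθ))^{−1})^{−1} and ∇f(θ) = −(1/n) Σ_{i=1}^n (1 + exp(y_i a_iᵀθ))^{−1} y_i a_i. -/

import Mathlib

open scoped RealInnerProductSpace BigOperators

/-- The gradient of the logistic loss `f(θ) = (1/n) Σ_i log(1 + exp(-y_i aᵢᵀθ))`. -/
noncomputable def logisticGrad {d n : ℕ} (a : Fin n → EuclideanSpace ℝ (Fin d))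
    (y : Fin n → ℝ) (θ : EuclideanSpace ℝ (Fin d)) : EuclideanSpace ℝ (Fin d) :=
  -(((1 : ℝ) / n) • ∑ i, ((1 + Real.exp (y i * ⟪a i, θ⟫))⁻¹ * y i) • a i)

/-- The normalization factor `β(θ) = ((1/n) Σ_i (1 + exp(y_i aᵢᵀθ))⁻¹)⁻¹`. -/
noncomputable def logisticBeta {d n : ℕ} (a : Fin n → EuclideanSpace ℝ (Fin d))
    (y : Fin n → ℝ) (θ : EuclideanSpace ℝ (Fin d)) : ℝ :=
  (((1 : ℝ) / n) * ∑ i, (1 + Real.exp (y i * ⟪a i, θ⟫))⁻¹)⁻¹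

/-!
Write `s_i = y_i aᵢᵀθ` and `w_i = (1 + exp s_i)⁻¹`, so that the left-hand side is the weighted
mean `Σ w_i s_i / S` with `S = Σ w_i`. For every `c > 0`, `log x ≤ x - 1` at `x = exp s / c`
gives `s ≤ log c + exp s / c - 1`. Since `w_i exp s_i = 1 - w_i`, the choice `c = (n - S) / S`
makes the exponential terms cancel the constant ones after summing, leaving
`Σ w_i s_i ≤ S log c`. A misclassified sample has `w_i ≥ 1/2`, so `S ≥ 1/2` and `c ≤ 2n - 1`.
-/

open Real Finset

noncomputable def logisticWeight (t : ℝ) : ℝ := (1 + exp t)⁻¹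

lemma logisticWeight_pos (t : ℝ) : 0 < logisticWeight t := by
  unfold logisticWeight; positivity

lemma logisticWeight_lt_one (t : ℝ) : logisticWeight t < 1 :=
  inv_lt_one_of_one_lt₀ (lt_add_of_pos_right 1 (exp_pos t))

lemma one_half_le_logisticWeight {t : ℝ} (ht : t ≤ 0) : 1 / 2 ≤ logisticWeight t := by
  have : exp t ≤ 1 := exp_le_one_iff.mpr ht
  rw [logisticWeight, one_div]
  gcongr
  linarith

lemma logisticWeight_mul_exp (t : ℝ) : logisticWeight t * exp t = 1 - logisticWeight t := by
  have : 1 + exp t ≠ 0 := by positivity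
  unfold logisticWeight
  field_simp
  ring

lemma le_log_add_exp_div_sub_one (s : ℝ) {c : ℝ} (hc : 0 < c) : s ≤ log c + exp s / c - 1 := by
  have := log_le_sub_one_of_pos (div_pos (exp_pos s) hc)
  rw [log_div (exp_ne_zero s) hc.ne', log_exp] at this
  linarith

lemma sum_mul_le_sum_mul_log_add {ι : Type*} (t : Finset ι) {w : ι → ℝ} (hw : ∀ i ∈ t, 0 ≤ w i)
    (s : ι → ℝ) {c : ℝ} (hc : 0 < c) :
    ∑ i ∈ t, w i * s i ≤ (∑ i ∈ t, w i) * (log c - 1) + (∑ i ∈ t, w i * exp (s i)) / c := by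
  calc ∑ i ∈ t, w i * s i ≤ ∑ i ∈ t, w i * (log c + exp (s i) / c - 1) :=
        sum_le_sum fun i hi => mul_le_mul_of_nonneg_left (le_log_add_exp_div_sub_one _ hc) (hw i hi)
    _ = _ := by rw [sum_mul, sum_div, ← sum_add_distrib]; exact sum_congr rfl fun i _ => by ring

section

variable {ι : Type*} [Fintype ι]

lemma sum_logisticWeight_mul_exp (s : ι → ℝ) :
    ∑ i, logisticWeight (s i) * exp (s i) = Fintype.card ι - ∑ i, logisticWeight (s i) := by
  simp only [logisticWeight_mul_exp, sum_sub_distrib, sum_const, card_univ, nsmul_eq_mul, mul_one]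

lemma sum_logisticWeight_lt_card [Nonempty ι] (s : ι → ℝ) :
    ∑ i, logisticWeight (s i) < Fintype.card ι := by
  simpa using sum_lt_sum_of_nonempty univ_nonempty fun i _ => logisticWeight_lt_one (s i)

lemma sum_logisticWeight_mul_le [Nonempty ι] (s : ι → ℝ) :
    ∑ i, logisticWeight (s i) * s i ≤
      (∑ i, logisticWeight (s i)) *
        log ((Fintype.card ι - ∑ i, logisticWeight (s i)) / ∑ i, logisticWeight (s i)) := by
  set S := ∑ i, logisticWeight (s i)
  have hS : 0 < S := sum_pos (fun i _ => logisticWeight_pos _) univ_nonempty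
  have hSn : S < Fintype.card ι := sum_logisticWeight_lt_card s
  have key := sum_mul_le_sum_mul_log_add univ (fun i _ => (logisticWeight_pos (s i)).le) s
    (div_pos (sub_pos.mpr hSn) hS)
  rw [sum_logisticWeight_mul_exp, div_div_cancel₀ (sub_pos.mpr hSn).ne'] at key
  linarith

lemma sum_logisticWeight_mul_div_le_log {s : ι → ℝ} (hs : ∃ j, s j ≤ 0) :
    (∑ i, logisticWeight (s i) * s i) / ∑ i, logisticWeight (s i) ≤
      log (2 * Fintype.card ι - 1) := by
  obtain ⟨j, hj⟩ := hs
  have : Nonempty ι := ⟨j⟩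
  set S := ∑ i, logisticWeight (s i)
  have hS : 1 / 2 ≤ S := (one_half_le_logisticWeight hj).trans
    (single_le_sum (fun i _ => (logisticWeight_pos (s i)).le) (mem_univ j))
  have hSn : S < Fintype.card ι := sum_logisticWeight_lt_card s
  rw [div_le_iff₀ (by linarith), mul_comm]
  refine (sum_logisticWeight_mul_le s).trans (mul_le_mul_of_nonneg_left ?_ (by linarith))
  refine log_le_log (div_pos (by linarith) (by linarith)) ?_
  rw [div_le_iff₀ (by linarith)]
  nlinarith

end

lemma neg_logisticBeta_mul_inner_logisticGrad {d n : ℕ} (a : Fin n → EuclideanSpace ℝ (Fin d))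
    (y : Fin n → ℝ) (θ : EuclideanSpace ℝ (Fin d)) :
    -(logisticBeta a y θ * ⟪θ, logisticGrad a y θ⟫) =
      (∑ i, logisticWeight (y i * ⟪a i, θ⟫) * (y i * ⟪a i, θ⟫)) /
        ∑ i, logisticWeight (y i * ⟪a i, θ⟫) := by
  have hinner : ⟪θ, logisticGrad a y θ⟫ =
      -((1 / (n : ℝ)) * ∑ i, logisticWeight (y i * ⟪a i, θ⟫) * (y i * ⟪a i, θ⟫)) := by
    rw [logisticGrad, inner_neg_right, inner_smul_right, inner_sum]
    congr 2
    refine sum_congr rfl fun i _ => ?_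
    rw [real_inner_smul_right, real_inner_comm, logisticWeight]
    ring
  have hbeta : logisticBeta a y θ = ((1 / (n : ℝ)) * ∑ i, logisticWeight (y i * ⟪a i, θ⟫))⁻¹ :=
    rfl
  rw [hinner, hbeta]
  rcases eq_or_ne n 0 with rfl | hn
  · simp
  · field_simp

theorem beta_inner_self_logisticGrad_le {d n : ℕ}
    (a : Fin n → EuclideanSpace ℝ (Fin d)) (y : Fin n → ℝ)
    (θ : EuclideanSpace ℝ (Fin d))
    (hmis : ∃ i, y i * ⟪a i, θ⟫ ≤ 0) :
    -(logisticBeta a y θ * ⟪θ, logisticGrad a y θ⟫) ≤ Real.log (2 * n - 1) := by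
  rw [neg_logisticBeta_mul_inner_logisticGrad]
  simpa using sum_logisticWeight_mul_div_le_log hmis
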